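/- arXiv:0911.4526 — 2 statements merged into one kernel-verified Lean document; each statement's English description precedes it below -/
import Mathlib

section
/- For a closed convex set K ⊆ ℝ^k with nonempty interior and a point z in K, the distance from z to the boundary of K equals the infimum over all supporting affine functionals ℓ of K of ℓ(z), where a supporting affine functional at a boundary point v is an affine map ℓ : ℝ^k → ℝ with ℓ ≥ 0 on K, ℓ(v) = 0, and |∇ℓ| = 1. -/
/-!
A point `z ∈ K` at distance `d` from `∂K` has the whole ball `B(z, d)` inside `K`, since the ball is
connected and misses `∂K`. Hence for a supporting functional `ν·(· − v)` the point `z − tν`, `t < d`,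
lies in `K`, which gives `ν·(z − v) ≥ d`. Conversely, at a point `v ∈ ∂K` nearest to `z` the
Hahn–Banach theorem provides a supporting functional, and `ν·(z − v) ≤ |z − v| = d`.
-/

open Metric

theorem IsPreconnected.subset_interior_of_disjoint_frontier {X : Type*} [TopologicalSpace X]
    {s t : Set X} (ht : IsPreconnected t) (hts : (t ∩ s).Nonempty)
    (hdisj : Disjoint t (frontier s)) : t ⊆ interior s := by
  have hsub : t ⊆ interior s ∪ interior sᶜ :=
    compl_frontier_eq_union_interior (s := s) ▸ hdisj.subset_compl_right
  obtain ⟨x, hxt, hxs⟩ := hts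
  have hxint : x ∈ interior s :=
    (hsub hxt).resolve_right fun h ↦ interior_subset h hxs
  exact ht.subset_left_of_subset_union isOpen_interior isOpen_interior
    (disjoint_compl_right.mono interior_subset interior_subset) hsub ⟨x, hxt, hxint⟩

theorem Metric.ball_infDist_frontier_subset_interior {E : Type*} [NormedAddCommGroup E]
    [NormedSpace ℝ E] {K : Set E} {z : E} (hz : z ∈ K) :
    ball z (infDist z (frontier K)) ⊆ interior K := by
  rcases (ball z (infDist z (frontier K))).eq_empty_or_nonempty with hempty | hne
  · simp [hempty]
  · exact (convex_ball _ _).isPreconnected.subset_interior_of_disjoint_frontier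
      ⟨z, mem_ball_self (nonempty_ball.mp hne), hz⟩ disjoint_ball_infDist

section InnerProductSpace

variable {E : Type*} [NormedAddCommGroup E] [InnerProductSpace ℝ E]

theorem infDist_frontier_le_inner {K : Set E} {z v ν : E} (hz : z ∈ K) (hν : ‖ν‖ = 1)
    (hsupp : ∀ w ∈ K, 0 ≤ inner ℝ ν (w - v)) :
    infDist z (frontier K) ≤ inner ℝ ν (z - v) := by
  refine le_of_forall_lt_imp_le_of_dense fun t ht ↦ ?_
  rcases lt_or_ge t 0 with ht0 | ht0
  · exact ht0.le.trans (hsupp z hz)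
  have hmem : z - t • ν ∈ K := by
    refine interior_subset (ball_infDist_frontier_subset_interior hz ?_)
    rwa [mem_ball, dist_eq_norm, sub_sub_cancel_left, norm_neg, norm_smul, hν, mul_one,
      Real.norm_of_nonneg ht0]
  have hinner : inner ℝ ν (z - t • ν - v) = inner ℝ ν (z - v) - t := by
    rw [sub_right_comm, inner_sub_right, real_inner_smul_right, real_inner_self_eq_norm_sq, hν]
    ring
  linarith [hsupp _ hmem]

theorem Convex.exists_norm_eq_one_inner_nonneg_of_notMem_interior [CompleteSpace E] {K : Set E}
    (hconv : Convex ℝ K) (hint : (interior K).Nonempty) {v : E} (hv : v ∉ interior K) :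
    ∃ ν : E, ‖ν‖ = 1 ∧ ∀ w ∈ K, 0 ≤ inner ℝ ν (w - v) := by
  obtain ⟨f, hf0, hfK⟩ := geometric_hahn_banach_of_nonempty_interior_point hconv hv hint
  set y := (InnerProductSpace.toDual ℝ E).symm f
  have hy : ∀ u, inner ℝ y u = f u := fun u ↦ InnerProductSpace.toDual_symm_apply
  have hy0 : 0 < ‖y‖ := norm_pos_iff.mpr <| by simpa [y] using hf0
  refine ⟨-(‖y‖⁻¹ • y), ?_, fun w hw ↦ ?_⟩
  · rw [norm_neg, norm_smul, norm_inv, norm_norm, inv_mul_cancel₀ hy0.ne']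
  · rw [inner_neg_left, real_inner_smul_left, hy, map_sub, neg_nonneg]
    exact mul_nonpos_of_nonneg_of_nonpos (inv_nonneg.mpr hy0.le) (sub_nonpos.mpr (hfK w hw))

end InnerProductSpace

theorem stmt0_general {k : ℕ} (K : Set (EuclideanSpace ℝ (Fin k)))
    (hconv : Convex ℝ K) (hint : (interior K).Nonempty)
    (hfr : (frontier K).Nonempty) (z : EuclideanSpace ℝ (Fin k)) (hz : z ∈ K) :
    infDist z (frontier K) =
      sInf {r : ℝ | ∃ v ν : EuclideanSpace ℝ (Fin k), v ∈ frontier K ∧ ‖ν‖ = 1 ∧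
        (∀ w ∈ K, (0:ℝ) ≤ inner ℝ ν (w - v)) ∧ r = inner ℝ ν (z - v)} := by
  obtain ⟨v, hv, hdist⟩ := isClosed_frontier.exists_infDist_eq_dist hfr z
  obtain ⟨ν, hν, hsupp⟩ := hconv.exists_norm_eq_one_inner_nonneg_of_notMem_interior hint hv.2
  have hattained : infDist z (frontier K) = inner ℝ ν (z - v) := by
    refine (infDist_frontier_le_inner hz hν hsupp).antisymm ?_
    calc inner ℝ ν (z - v) ≤ ‖ν‖ * ‖z - v‖ := real_inner_le_norm ν (z - v)
      _ = infDist z (frontier K) := by rw [hν, one_mul, hdist, dist_eq_norm]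
  refine (IsLeast.csInf_eq ⟨?_, ?_⟩).symm
  · exact ⟨v, ν, hv, hν, hsupp, hattained⟩
  · rintro r ⟨v', ν', -, hν', hsupp', rfl⟩
    exact infDist_frontier_le_inner hz hν' hsupp'

/-- For a closed convex set `K ⊆ ℝ^k` with nonempty interior (and nonempty
boundary) and `z ∈ K`, the distance from `z` to `∂K` equals the infimum of `ℓ(z)` over all
supporting affine functionals `ℓ` of `K`, where a supporting affine functional at `v ∈ ∂K`
is `ℓ(w) = ν·(w − v)` with `‖ν‖ = 1` and `ℓ ≥ 0` on `K`. -/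
theorem stmt0 {k : ℕ} (K : Set (EuclideanSpace ℝ (Fin k)))
    (hK : IsClosed K) (hconv : Convex ℝ K) (hint : (interior K).Nonempty)
    (hfr : (frontier K).Nonempty) (z : EuclideanSpace ℝ (Fin k)) (hz : z ∈ K) :
    infDist z (frontier K) =
      sInf {r : ℝ | ∃ v ν : EuclideanSpace ℝ (Fin k), v ∈ frontier K ∧ ‖ν‖ = 1 ∧
        (∀ w ∈ K, (0:ℝ) ≤ inner ℝ ν (w - v)) ∧ r = inner ℝ ν (z - v)} :=
  stmt0_general K hconv hint hfr z hz
end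

section
/- Let u : Ω → ℝ^k be C^{2,1} on an open set Ω ⊆ ℝⁿ × (0,∞) satisfying ∂u/∂t = Δu + φ(u) componentwise, where φ : ℝ^k → ℝ^k is Lipschitz. Let K be a closed convex set with u(x,t) ∈ K for all (x,t) ∈ Ω, and suppose φ(v)·ν ≥ 0 for every v ∈ ∂K and every inward pointing unit vector ν at v. Let (x̂,t̂) ∈ Ω, v ∈ ∂K with |u(x̂,t̂) − v| = dist(u(x̂,t̂), ∂K), and ℓ(z) = ν·(z−v) a supporting affine functional at v. Then at (x̂,t̂), the function ℓ̄(x,t) = ℓ(u(x,t)) satisfies ℓ̄_t − Δℓ̄ + p·ℓ̄ ≥ 0, where p is a Lipschitz constant for φ. -/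
/-!
Because `ℓ` is affine, `ℓ̄_t - Δℓ̄ = ν·(u_t - Δu) = ν·φ(u)`, and the Lipschitz bound with the
compatibility condition gives `ν·φ(u) ≥ ν·φ(v) - p|u - v| ≥ -p|u - v|`. It remains to see
`|u - v| ≤ ℓ(u)`: as `v` is a nearest boundary point, the closed ball of radius `|u - v|` about `u`
lies in `K`, hence in the half-space `ℓ ≥ 0`, and evaluating `ℓ` at `u - |u - v| ν` gives the claim.
-/

open Metric Set Filter Topology

theorem IsPreconnected.inter_frontier_nonempty {X : Type*} [TopologicalSpace X] {s t : Set X}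
    (hs : IsPreconnected s) (hin : (s ∩ t).Nonempty) (hout : (s \ t).Nonempty) :
    (s ∩ frontier t).Nonempty := by
  by_contra h
  have hcover : s ⊆ interior t ∪ (closure t)ᶜ := fun x hx => by
    by_cases hxt : x ∈ closure t
    · rw [← closure_sdiff_frontier]
      exact Or.inl ⟨hxt, fun hxf => h ⟨x, hx, hxf⟩⟩
    · exact Or.inr hxt
  obtain ⟨x, hxs, hxt⟩ := hin
  obtain ⟨y, hys, hyt⟩ := hout
  obtain ⟨z, -, hzi, hzc⟩ := hs _ _ isOpen_interior isClosed_closure.isOpen_compl hcover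
    ⟨x, hxs, (hcover hxs).resolve_right (not_not.2 (subset_closure hxt))⟩
    ⟨y, hys, (hcover hys).resolve_left fun hyi => hyt (interior_subset hyi)⟩
  exact hzc (subset_closure (interior_subset hzi))

section Geometry

variable {E : Type*}

theorem ball_infDist_frontier_subset [NormedAddCommGroup E] [NormedSpace ℝ E] {K : Set E} {a : E}
    (ha : a ∈ K) : ball a (infDist a (frontier K)) ⊆ K := by
  intro y hy
  by_contra hyK
  obtain ⟨z, hz, hzK⟩ := (convex_ball a _).isPreconnected.inter_frontier_nonempty
    ⟨a, mem_ball_self (pos_of_mem_ball hy), ha⟩ ⟨y, hy, hyK⟩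
  exact (infDist_le_dist_of_mem hzK).not_gt (mem_ball'.1 hz)

theorem closedBall_infDist_frontier_subset [NormedAddCommGroup E] [NormedSpace ℝ E] {K : Set E}
    {a : E} (hK : IsClosed K) (ha : a ∈ K) : closedBall a (infDist a (frontier K)) ⊆ K := by
  rcases eq_or_ne (infDist a (frontier K)) 0 with h | h
  · rw [h, closedBall_zero]
    exact singleton_subset_iff.2 ha
  · rw [← closure_ball a h]
    exact closure_minimal (ball_infDist_frontier_subset ha) hK

variable [NormedAddCommGroup E] [InnerProductSpace ℝ E]

theorem le_inner_sub_of_closedBall_subset {a v ν : E} {r : ℝ} (hr : 0 ≤ r) (hν : ‖ν‖ = 1)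
    (h : ∀ w ∈ closedBall a r, 0 ≤ inner ℝ ν (w - v)) : r ≤ inner ℝ ν (a - v) := by
  have hmem : a - r • ν ∈ closedBall a r := by
    rw [mem_closedBall, dist_eq_norm, sub_sub_cancel_left, norm_neg, norm_smul, hν,
      Real.norm_of_nonneg hr, mul_one]
  have hshift : inner ℝ ν (a - r • ν - v) = inner ℝ ν (a - v) - r := by
    rw [sub_right_comm, inner_sub_right, inner_smul_right, real_inner_self_eq_norm_sq, hν]
    ring
  linarith [h _ hmem]

theorem dist_le_inner_sub_of_infDist_frontier {K : Set E} {a v ν : E} (hK : IsClosed K)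
    (ha : a ∈ K) (hnear : dist a v = infDist a (frontier K)) (hν : ‖ν‖ = 1)
    (hsupp : ∀ w ∈ K, 0 ≤ inner ℝ ν (w - v)) : dist a v ≤ inner ℝ ν (a - v) :=
  le_inner_sub_of_closedBall_subset dist_nonneg hν fun w hw =>
    hsupp w (closedBall_infDist_frontier_subset hK ha (hnear ▸ hw))

theorem LipschitzWith.inner_sub_mul_dist_le {X : Type*} [PseudoMetricSpace X] {φ : X → E}
    {L : NNReal} (hφ : LipschitzWith L φ) {ν : E} (hν : ‖ν‖ = 1) (a v : X) :
    inner ℝ ν (φ v) - L * dist a v ≤ inner ℝ ν (φ a) := by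
  have hCS : inner ℝ ν (φ v - φ a) ≤ dist (φ v) (φ a) := by
    simpa [hν, dist_eq_norm] using real_inner_le_norm ν (φ v - φ a)
  rw [inner_sub_right] at hCS
  linarith [dist_comm a v ▸ hφ.dist_le_mul v a]

end Geometry

section Calculus

variable {E : Type*} [NormedAddCommGroup E] [InnerProductSpace ℝ E]

theorem deriv_inner_sub {f : ℝ → E} {x : ℝ} (hf : DifferentiableAt ℝ f x) (ν v : E) :
    deriv (fun s => inner ℝ ν (f s - v)) x = inner ℝ ν (deriv f x) := by
  simpa using ((hasDerivAt_const x ν).inner ℝ (hf.hasDerivAt.sub_const v)).deriv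

theorem deriv_deriv_inner_sub {f : ℝ → E} {x : ℝ} (hf : ContDiffAt ℝ 2 f x) (ν v : E) :
    deriv (deriv fun s => inner ℝ ν (f s - v)) x = inner ℝ ν (deriv (deriv f) x) := by
  have hfirst : deriv (fun s => inner ℝ ν (f s - v)) =ᶠ[𝓝 x] fun s => inner ℝ ν (deriv f s) :=
    (hf.eventually (by simp)).mono fun y hy =>
      deriv_inner_sub (hy.differentiableAt (by norm_num)) ν v
  rw [hfirst.deriv_eq]
  have hf' : DifferentiableAt ℝ (deriv f) x :=
    (hf.derivWithin (m := 1) (by norm_num)).differentiableAt one_ne_zero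
  simpa using ((hasDerivAt_const x ν).inner ℝ hf'.hasDerivAt).deriv

end Calculus

theorem stmt12_general {n k : ℕ} (Ω : Set (EuclideanSpace ℝ (Fin n) × ℝ)) (hΩ : IsOpen Ω)
    (u : EuclideanSpace ℝ (Fin n) × ℝ → EuclideanSpace ℝ (Fin k))
    (hu : ContDiffOn ℝ 2 u Ω)
    (φ : EuclideanSpace ℝ (Fin k) → EuclideanSpace ℝ (Fin k))
    (p : ℝ) (hp : 0 ≤ p) (hφ : LipschitzWith (Real.toNNReal p) φ)
    (heqn : ∀ q ∈ Ω,
      deriv (fun s => u (q.1, s)) q.2 =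
        (∑ i : Fin n, deriv (deriv (fun y : ℝ =>
            u (q.1 + y • EuclideanSpace.single i (1:ℝ), q.2))) 0) + φ (u q))
    (K : Set (EuclideanSpace ℝ (Fin k))) (hK : IsClosed K)
    (huK : ∀ q ∈ Ω, u q ∈ K)
    (hcompat : ∀ v' ∈ frontier K, ∀ ν' : EuclideanSpace ℝ (Fin k), ‖ν'‖ = 1 →
      (∀ w ∈ K, (0:ℝ) ≤ inner ℝ ν' (w - v')) → (0:ℝ) ≤ inner ℝ ν' (φ v'))
    (xhat : EuclideanSpace ℝ (Fin n)) (that : ℝ) (hq : (xhat, that) ∈ Ω)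
    (v : EuclideanSpace ℝ (Fin k)) (hv : v ∈ frontier K)
    (hnear : dist (u (xhat, that)) v = infDist (u (xhat, that)) (frontier K))
    (ν : EuclideanSpace ℝ (Fin k)) (hν : ‖ν‖ = 1)
    (hsupp : ∀ w ∈ K, (0:ℝ) ≤ inner ℝ ν (w - v)) :
    0 ≤ deriv (fun s => (inner ℝ ν (u (xhat, s) - v) : ℝ)) that
        - (∑ i : Fin n, deriv (deriv (fun y : ℝ =>
            (inner ℝ ν (u (xhat + y • EuclideanSpace.single i (1:ℝ), that) - v) : ℝ))) 0)
        + p * (inner ℝ ν (u (xhat, that) - v) : ℝ) := by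
  have hu_at : ContDiffAt ℝ 2 u (xhat, that) := hu.contDiffAt (hΩ.mem_nhds hq)
  have htime : DifferentiableAt ℝ (fun s => u (xhat, s)) that :=
    (hu_at.differentiableAt (by norm_num)).comp that (by fun_prop)
  have hspace (i : Fin n) :
      ContDiffAt ℝ 2 (fun y : ℝ => u (xhat + y • EuclideanSpace.single i (1:ℝ), that)) 0 :=
    (show ContDiffAt ℝ 2 u (xhat + (0:ℝ) • EuclideanSpace.single i (1:ℝ), that) by
      simpa using hu_at).comp 0 (by fun_prop)
  have hdist : dist (u (xhat, that)) v ≤ inner ℝ ν (u (xhat, that) - v) :=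
    dist_le_inner_sub_of_infDist_frontier hK (huK _ hq) hnear hν hsupp
  have hreact := hφ.inner_sub_mul_dist_le hν (u (xhat, that)) v
  rw [Real.coe_toNNReal p hp] at hreact
  have hφv : 0 ≤ inner ℝ ν (φ v) := hcompat v hv ν hν hsupp
  simp only [deriv_inner_sub htime, deriv_deriv_inner_sub (hspace _), ← inner_sum,
    heqn _ hq, inner_add_right]
  linarith [mul_le_mul_of_nonneg_left hdist hp]

/-- For `u : Ω → ℝ^k` of class `C²` solving `u_t = Δu + φ(u)` with `φ`
`p`-Lipschitz, `u` valued in a closed convex set `K` compatible with `φ`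
(`φ(v)·ν ≥ 0` for all inward pointing unit vectors `ν` at `v ∈ ∂K`), if `v ∈ ∂K` is a
nearest boundary point to `u(x̂,t̂)` and `ℓ(z) = ν·(z−v)` is a supporting affine functional
at `v`, then `ℓ̄ = ℓ∘u` satisfies `ℓ̄_t − Δℓ̄ + p·ℓ̄ ≥ 0` at `(x̂,t̂)`. -/
theorem stmt12 {n k : ℕ} (Ω : Set (EuclideanSpace ℝ (Fin n) × ℝ)) (hΩ : IsOpen Ω)
    (hΩt : ∀ q ∈ Ω, 0 < q.2)
    (u : EuclideanSpace ℝ (Fin n) × ℝ → EuclideanSpace ℝ (Fin k))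
    (hu : ContDiffOn ℝ 2 u Ω)
    (φ : EuclideanSpace ℝ (Fin k) → EuclideanSpace ℝ (Fin k))
    (p : ℝ) (hp : 0 ≤ p) (hφ : LipschitzWith (Real.toNNReal p) φ)
    (heqn : ∀ q ∈ Ω,
      deriv (fun s => u (q.1, s)) q.2 =
        (∑ i : Fin n, deriv (deriv (fun y : ℝ =>
            u (q.1 + y • EuclideanSpace.single i (1:ℝ), q.2))) 0) + φ (u q))
    (K : Set (EuclideanSpace ℝ (Fin k))) (hK : IsClosed K) (hconv : Convex ℝ K)
    (huK : ∀ q ∈ Ω, u q ∈ K)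
    (hcompat : ∀ v' ∈ frontier K, ∀ ν' : EuclideanSpace ℝ (Fin k), ‖ν'‖ = 1 →
      (∀ w ∈ K, (0:ℝ) ≤ inner ℝ ν' (w - v')) → (0:ℝ) ≤ inner ℝ ν' (φ v'))
    (xhat : EuclideanSpace ℝ (Fin n)) (that : ℝ) (hq : (xhat, that) ∈ Ω)
    (v : EuclideanSpace ℝ (Fin k)) (hv : v ∈ frontier K)
    (hnear : dist (u (xhat, that)) v = infDist (u (xhat, that)) (frontier K))
    (ν : EuclideanSpace ℝ (Fin k)) (hν : ‖ν‖ = 1)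
    (hsupp : ∀ w ∈ K, (0:ℝ) ≤ inner ℝ ν (w - v)) :
    0 ≤ deriv (fun s => (inner ℝ ν (u (xhat, s) - v) : ℝ)) that
        - (∑ i : Fin n, deriv (deriv (fun y : ℝ =>
            (inner ℝ ν (u (xhat + y • EuclideanSpace.single i (1:ℝ), that) - v) : ℝ))) 0)
        + p * (inner ℝ ν (u (xhat, that) - v) : ℝ) :=
  stmt12_general Ω hΩ u hu φ p hp hφ heqn K hK huK hcompat xhat that hq v hv hnear ν hν hsupp
end
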